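/- Let D be an n×n matrix over ℤ/2 with D·D = 0. Suppose A is an index such that every column of D with index strictly less than A is zero and the column D_A is nonzero, and set b = low(D, A). Let E be the matrix obtained from D by adding (mod 2) the column D_A to every column j ≠ A with D b j = 1, and let D' be the (n−2)×(n−2) matrix obtained from E by deleting row and column A and row and column b. Then: (1) D'·D' = 0; (2) for any upper-triangular unitriangular matrices V, V' such that R = D·V and R' = D'·V' are reduced, the set of pairs {(low(R, j), j) : column R_j nonzero} equals {(b, A)} together with the image, under the order-preserving inclusion of the remaining n−2 indices into the original n indices, of the set {(low(R', j), j) : column R'_j nonzero}. (Core of Theorem: making a single Morse matching (A, b) and computing the resulting Morse boundary is equivalent to resolving at once all future collisions caused by row b in the matrix-reduction algorithm, and records the persistence pair (b, A).) -/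

import Mathlib

/-!
On a reduced matrix, right multiplication by an upper unitriangular matrix cannot move a low
without creating a collision, so all reductions of a matrix have the same lows. Take a reduction
`R = D V`: column `A` of `R` is column `A` of `D`, with low `b`, and by the clearing lemma column
`b` of `R` vanishes and no low equals `A`. Adding column `A` of `R` to the columns with a one in
row `b` clears that row without moving a low, since those lows lie strictly below row `b`. As
`addColA D A b = D C` with `C` unitriangular, the result is `addColA D A b * W` with `W`
unitriangular, and clearing row `b` of `W` with its column `b` makes rows `b` and `A` of `W`
unit vectors. Deleting rows and columns `b` and `A` then commutes with the product and yields a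
reduction of `D'` carrying every pair of `R` except `(b, A)`.
For `D' * D' = 0`: `(addColA D A b)²` is column `A` times row `A`, and row `b` of
`addColA D A b` is the unit vector at `A`.
-/

/-- The `j`-th column of the matrix `R`. -/
def column {n : ℕ} (R : Matrix (Fin n) (Fin n) (ZMod 2)) (j : Fin n) : Fin n → ZMod 2 :=
  fun i => R i j

/-- `low v` is the largest index at which the vector `v` over `ℤ/2` is nonzero
(`⊥` if `v = 0`). -/
def low {n : ℕ} (v : Fin n → ZMod 2) : WithBot (Fin n) :=
  (Finset.univ.filter (fun i => v i ≠ 0)).max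

/-- `lowM R j` is the lowest-one position of the `j`-th column of `R`. -/
def lowM {n : ℕ} (R : Matrix (Fin n) (Fin n) (ZMod 2)) (j : Fin n) : WithBot (Fin n) :=
  low (column R j)

/-- A matrix over `ℤ/2` is reduced if its nonzero columns have pairwise distinct
lowest-one positions. -/
def ReducedMat {n : ℕ} (R : Matrix (Fin n) (Fin n) (ZMod 2)) : Prop :=
  ∀ j k : Fin n, j ≠ k → column R j ≠ 0 → column R k ≠ 0 → lowM R j ≠ lowM R k

/-- A matrix is upper-triangular with all diagonal entries equal to `1`. -/
def IsUpperUnitriangular {n : ℕ} (V : Matrix (Fin n) (Fin n) (ZMod 2)) : Prop :=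
  (∀ i j : Fin n, j < i → V i j = 0) ∧ ∀ i : Fin n, V i i = 1

/-- The matrix obtained from `D` by adding (mod 2) the column `A` of `D` to every
column `j ≠ A` having `D b j = 1`. -/
def addColA {n : ℕ} (D : Matrix (Fin n) (Fin n) (ZMod 2)) (A b : Fin n) :
    Matrix (Fin n) (Fin n) (ZMod 2) :=
  fun i j => if j ≠ A ∧ D b j = 1 then D i j + D i A else D i j

/-- The matrix obtained from `addColA D A b` by deleting rows and columns `A` and `b`,
indexed via the order-preserving inclusion of the remaining `n − 2` indices. -/
def morseReduce {n : ℕ} (D : Matrix (Fin n) (Fin n) (ZMod 2)) (A b : Fin n)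
    (hcard : ({b, A}ᶜ : Finset (Fin n)).card = n - 2) :
    Matrix (Fin (n - 2)) (Fin (n - 2)) (ZMod 2) :=
  fun i j =>
    addColA D A b (Finset.orderEmbOfFin _ hcard i) (Finset.orderEmbOfFin _ hcard j)

open Finset Matrix

section Low

variable {n : ℕ} {v w : Fin n → ZMod 2}

lemma low_eq_bot_iff : low v = ⊥ ↔ v = 0 := by
  simp [low, Finset.max_eq_bot, filter_eq_empty_iff, funext_iff]

@[simp]
lemma low_zero : low (0 : Fin n → ZMod 2) = ⊥ :=
  low_eq_bot_iff.2 rfl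

lemma coe_le_low {m : Fin n} (h : v m ≠ 0) : (m : WithBot (Fin n)) ≤ low v :=
  le_max (by simpa using h)

lemma apply_eq_zero_of_low_lt {m : Fin n} (h : low v < m) : v m = 0 :=
  not_not.1 fun hm => (coe_le_low hm).not_gt h

lemma low_eq_coe_iff {i : Fin n} : low v = i ↔ v i ≠ 0 ∧ ∀ m, i < m → v m = 0 := by
  refine ⟨fun h => ⟨by simpa using mem_of_max h, fun m hm => apply_eq_zero_of_low_lt ?_⟩,
    fun ⟨hi, h⟩ => le_antisymm (Finset.max_le fun m hm => ?_) (coe_le_low hi)⟩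
  · exact h ▸ WithBot.coe_lt_coe.2 hm
  · exact WithBot.coe_le_coe.2 (not_lt.1 fun him => (mem_filter.1 hm).2 (h m him))

lemma exists_low_eq_coe (h : v ≠ 0) : ∃ i : Fin n, low v = i :=
  (WithBot.ne_bot_iff_exists.1 (mt low_eq_bot_iff.1 h)).imp fun _ => Eq.symm

lemma apply_eq_one_of_low_eq {i : Fin n} (h : low v = i) : v i = 1 :=
  Fin.eq_one_of_ne_zero _ (low_eq_coe_iff.1 h).1

lemma low_comp_orderEmbedding {m : ℕ} (e : Fin m ↪o Fin n)
    (h : ∀ i : Fin n, low v = i → i ∈ Set.range e) : (low (v ∘ e)).map e = low v := by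
  rcases eq_or_ne v 0 with rfl | hv
  · rw [Pi.zero_comp, low_zero, WithBot.map_bot, low_zero]
  obtain ⟨i, hi⟩ := exists_low_eq_coe hv
  obtain ⟨p, rfl⟩ := h i hi
  obtain ⟨hvp, hv⟩ := low_eq_coe_iff.1 hi
  rw [hi, (low_eq_coe_iff (v := v ∘ e)).2 ⟨hvp, fun k hk => hv (e k) (e.strictMono hk)⟩,
    WithBot.map_coe]

lemma low_smul {c : ZMod 2} (hc : c ≠ 0) : low (c • v) = low v := by
  simp [low, hc]

lemma low_add_eq_left (h : ∀ m, w m ≠ 0 → (m : WithBot (Fin n)) < low v) :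
    low (v + w) = low v := by
  have hw : ∀ m : Fin n, low v ≤ m → w m = 0 :=
    fun m hm => not_not.1 fun hwm => (h m hwm).not_ge hm
  rcases eq_or_ne v 0 with rfl | hv
  · have : w = 0 := funext fun m => hw m (by simp)
    simp [this]
  obtain ⟨i, hi⟩ := exists_low_eq_coe hv
  rw [hi] at hw ⊢
  obtain ⟨hvi, hv⟩ := low_eq_coe_iff.1 hi
  refine low_eq_coe_iff.2 ⟨by simpa [hw i le_rfl] using hvi, fun m hm => ?_⟩
  simp [hv m hm, hw m (WithBot.coe_le_coe.2 hm.le)]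

lemma low_add_of_low_ne (h : low v ≠ low w) : low (v + w) = low v ⊔ low w := by
  have key : ∀ {v w : Fin n → ZMod 2}, low w < low v → low (v + w) = low v ⊔ low w :=
    fun hlt => by
      rw [low_add_eq_left fun m hm => (coe_le_low hm).trans_lt hlt, sup_of_le_left hlt.le]
  rcases h.lt_or_gt with hlt | hlt
  · rw [add_comm, sup_comm]
    exact key hlt
  · exact key hlt

lemma low_sum_eq_sup {ι : Type*} [DecidableEq ι] (s : Finset ι) (f : ι → Fin n → ZMod 2)
    (hf : ∀ k ∈ s, ∀ l ∈ s, k ≠ l → low (f k) = low (f l) → f k = 0) :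
    low (∑ k ∈ s, f k) = s.sup fun k => low (f k) := by
  induction s using Finset.induction_on with
  | empty => simp
  | insert a s ha ih =>
    have ih := ih fun k hk l hl => hf k (mem_insert_of_mem hk) l (mem_insert_of_mem hl)
    rw [sum_insert ha, sup_insert, ← ih]
    rcases eq_or_ne (f a) 0 with hfa | hfa
    · simp [hfa]
    refine low_add_of_low_ne fun heq => hfa ?_
    rw [ih] at heq
    rcases s.eq_empty_or_nonempty with rfl | hs
    · exact low_eq_bot_iff.1 (by simpa using heq)
    obtain ⟨k, hk, hks⟩ := exists_mem_eq_sup s hs fun k => low (f k)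
    exact hf a (mem_insert_self a s) k (mem_insert_of_mem hk) (fun h => ha (h ▸ hk))
      (heq.trans hks)

end Low

section Reduced

variable {n : ℕ} {R : Matrix (Fin n) (Fin n) (ZMod 2)}

lemma lowM_eq_bot_iff {j : Fin n} : lowM R j = ⊥ ↔ column R j = 0 :=
  low_eq_bot_iff

lemma column_ne_zero_of_lowM_eq_coe {i j : Fin n} (h : lowM R j = i) : column R j ≠ 0 :=
  fun h0 => by simp [lowM_eq_bot_iff.2 h0] at h

lemma apply_eq_one_of_lowM_eq {i j : Fin n} (h : lowM R j = i) : R i j = 1 :=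
  apply_eq_one_of_low_eq (v := column R j) h

lemma reducedMat_iff_lowM :
    ReducedMat R ↔ ∀ j k, j ≠ k → lowM R j = lowM R k → lowM R j = ⊥ := by
  simp only [ReducedMat, ne_eq, ← lowM_eq_bot_iff]
  refine ⟨fun h j k hjk heq => ?_, fun h j k hjk hj _ heq => hj (h j k hjk heq)⟩
  by_contra hj
  exact h j k hjk hj (heq ▸ hj) heq

lemma ReducedMat.column_eq_zero_of_lowM_eq (hR : ReducedMat R) {j k : Fin n} (hjk : j ≠ k)
    (h : lowM R j = lowM R k) : column R j = 0 :=
  lowM_eq_bot_iff.1 (reducedMat_iff_lowM.1 hR j k hjk h)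

lemma ReducedMat.of_lowM_eq {R' : Matrix (Fin n) (Fin n) (ZMod 2)} (hR : ReducedMat R)
    (h : lowM R' = lowM R) : ReducedMat R' :=
  reducedMat_iff_lowM.2 (h ▸ reducedMat_iff_lowM.1 hR)

lemma column_mul (R W : Matrix (Fin n) (Fin n) (ZMod 2)) (j : Fin n) :
    column (R * W) j = ∑ k, W k j • column R k := by
  ext i
  simp [column, mul_apply, mul_comm]

lemma ReducedMat.lowM_mul (hR : ReducedMat R) (W : Matrix (Fin n) (Fin n) (ZMod 2))
    (j : Fin n) : lowM (R * W) j = ({k | W k j ≠ 0} : Finset (Fin n)).sup (lowM R) := by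
  rw [lowM, column_mul, ← sum_filter_of_ne fun k _ h => left_ne_zero_of_smul h, low_sum_eq_sup]
  · exact sup_congr rfl fun k hk => low_smul (mem_filter.1 hk).2
  · intro k hk l hl hkl h
    rw [low_smul (mem_filter.1 hk).2, low_smul (mem_filter.1 hl).2] at h
    rw [hR.column_eq_zero_of_lowM_eq hkl h, smul_zero]

lemma ReducedMat.column_eq_zero_of_mul_eq_zero {N : Matrix (Fin n) (Fin n) (ZMod 2)}
    (hR : ReducedMat R) (hRN : R * N = 0) {k j : Fin n} (h : N k j ≠ 0) : column R k = 0 := by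
  rw [← lowM_eq_bot_iff, ← le_bot_iff]
  calc lowM R k ≤ ({k | N k j ≠ 0} : Finset (Fin n)).sup (lowM R) := le_sup (by simpa using h)
    _ = ⊥ := by rw [← hR.lowM_mul, hRN]; exact lowM_eq_bot_iff.2 rfl

lemma ReducedMat.lowM_mul_of_isUpperUnitriangular (hR : ReducedMat R)
    {W : Matrix (Fin n) (Fin n) (ZMod 2)} (hW : IsUpperUnitriangular W)
    (hRW : ReducedMat (R * W)) : lowM (R * W) = lowM R := by
  funext j
  induction j using WellFoundedLT.induction with
  | ind j ih =>
  -- If the largest low among the columns used by column `j` of `R * W` came from an earlier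
  -- column `k`, then columns `k` and `j` of `R * W` would share it.
  have hjT : j ∈ ({k | W k j ≠ 0} : Finset (Fin n)) := by simp [hW.2 j]
  obtain ⟨k, hkT, hk⟩ := exists_mem_eq_sup _ ⟨j, hjT⟩ (lowM R)
  rw [hR.lowM_mul, hk]
  obtain rfl | hkj := eq_or_ne k j
  · rfl
  have hkj : k < j := lt_of_le_of_ne (not_lt.1 fun h => (mem_filter.1 hkT).2 (hW.1 k j h)) hkj
  have hk0 : lowM R k = ⊥ := by
    rw [← ih k hkj, lowM_eq_bot_iff]
    exact hRW.column_eq_zero_of_lowM_eq hkj.ne (by rw [ih k hkj, hR.lowM_mul, hk])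
  have hjk : lowM R j ≤ lowM R k := hk ▸ le_sup hjT
  rw [hk0] at hjk ⊢
  exact (le_bot_iff.1 hjk).symm

end Reduced

lemma Matrix.IsUpperTriangular.mul_apply_self {α : Type*} [Semiring α] {n : ℕ}
    {V W : Matrix (Fin n) (Fin n) α} (hV : V.IsUpperTriangular) (hW : W.IsUpperTriangular)
    (i : Fin n) : (V * W) i i = V i i * W i i := by
  rw [mul_apply, sum_eq_single i (fun k _ hki => ?_) (by simp)]
  rcases hki.lt_or_gt with h | h
  · rw [hV h, zero_mul]
  · rw [hW h, mul_zero]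

namespace IsUpperUnitriangular

variable {n : ℕ} {V W : Matrix (Fin n) (Fin n) (ZMod 2)}

lemma isUpperTriangular (hV : IsUpperUnitriangular V) : V.IsUpperTriangular :=
  fun i j h => hV.1 i j h

lemma mul (hV : IsUpperUnitriangular V) (hW : IsUpperUnitriangular W) :
    IsUpperUnitriangular (V * W) :=
  ⟨fun _ _ h => (hV.isUpperTriangular.mul hW.isUpperTriangular) h, fun i => by
    rw [hV.isUpperTriangular.mul_apply_self hW.isUpperTriangular, hV.2, hW.2, one_mul]⟩

lemma isUnit_det (hV : IsUpperUnitriangular V) : IsUnit V.det := by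
  simp [det_of_isUpperTriangular hV.isUpperTriangular, hV.2]

lemma mul_inv (hV : IsUpperUnitriangular V) : V * V⁻¹ = 1 :=
  mul_nonsing_inv V hV.isUnit_det

lemma inv (hV : IsUpperUnitriangular V) : IsUpperUnitriangular V⁻¹ := by
  have : Invertible V := V.invertibleOfIsUnitDet hV.isUnit_det
  have hinv : V⁻¹.IsUpperTriangular := blockTriangular_inv_of_blockTriangular hV.isUpperTriangular
  refine ⟨fun _ _ h => hinv h, fun i => ?_⟩
  have := hinv.mul_apply_self hV.isUpperTriangular i
  rwa [nonsing_inv_mul V hV.isUnit_det, hV.2, mul_one, one_apply_eq, eq_comm] at this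

lemma submatrix (hV : IsUpperUnitriangular V) {m : ℕ} (e : Fin m ↪o Fin n) :
    IsUpperUnitriangular (V.submatrix e e) :=
  ⟨fun _ _ h => hV.1 _ _ (e.strictMono h), fun _ => hV.2 _⟩

lemma mul_apply_of_lowM_eq (hV : IsUpperUnitriangular V) {R : Matrix (Fin n) (Fin n) (ZMod 2)}
    {i j : Fin n} (h : lowM R j = i) : (V * R) i j = R i j := by
  rw [mul_apply, sum_eq_single i (fun m _ hmi => ?_) (by simp), hV.2, one_mul]
  rcases hmi.lt_or_gt with hm | hm
  · rw [hV.1 i m hm, zero_mul]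
  · rw [show R m j = 0 from (low_eq_coe_iff.1 h).2 m hm, mul_zero]

end IsUpperUnitriangular

theorem lowM_mul_eq_of_reducedMat {n : ℕ} (M : Matrix (Fin n) (Fin n) (ZMod 2))
    {V₁ V₂ : Matrix (Fin n) (Fin n) (ZMod 2)} (h₁ : IsUpperUnitriangular V₁)
    (h₂ : IsUpperUnitriangular V₂) (hR₁ : ReducedMat (M * V₁)) (hR₂ : ReducedMat (M * V₂)) :
    lowM (M * V₁) = lowM (M * V₂) := by
  have hM : M * V₂ = M * V₁ * (V₁⁻¹ * V₂) := by
    rw [Matrix.mul_assoc, ← Matrix.mul_assoc V₁, h₁.mul_inv, Matrix.one_mul]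
  rw [hM] at hR₂ ⊢
  exact (hR₁.lowM_mul_of_isUpperUnitriangular (h₁.inv.mul h₂) hR₂).symm

/-- The clearing lemma: `(D V) (V⁻¹ D V) = D² V = 0`, and column `j` of `V⁻¹ D V` has a one in
row `i`, so column `i` of `D V` must vanish. -/
theorem column_eq_zero_of_lowM_eq_of_mul_self_eq_zero {n : ℕ}
    {D V : Matrix (Fin n) (Fin n) (ZMod 2)} (hDD : D * D = 0)
    (hV : IsUpperUnitriangular V) (hR : ReducedMat (D * V)) {i j : Fin n}
    (h : lowM (D * V) j = i) : column (D * V) i = 0 := by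
  refine hR.column_eq_zero_of_mul_eq_zero (N := V⁻¹ * (D * V)) (j := j) ?_ ?_
  · rw [← Matrix.mul_assoc, Matrix.mul_assoc D, hV.mul_inv, Matrix.mul_one, ← Matrix.mul_assoc,
      hDD, Matrix.zero_mul]
  · rw [hV.inv.mul_apply_of_lowM_eq h]
    exact (low_eq_coe_iff.1 h).1

/-- Right multiplication by `clearRowOp M i a` adds column `a` to every column `j ≠ a` with
`M i j = 1`; if `M i a = 1`, this clears row `i` of `M` outside column `a`. -/
def clearRowOp {n : ℕ} (M : Matrix (Fin n) (Fin n) (ZMod 2)) (i a : Fin n) :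
    Matrix (Fin n) (Fin n) (ZMod 2) :=
  1 + vecMulVec (Pi.single a 1) (M i - Pi.single a 1)

lemma mul_row_eq_of_row_eq_single {α : Type*} [Semiring α] {n : ℕ}
    {E W : Matrix (Fin n) (Fin n) α} {i a : Fin n} (h : E i = Pi.single a 1) :
    (E * W) i = W a := by
  ext j
  simp [mul_apply, h, Pi.single_apply]

section ClearRowOp

variable {n : ℕ} {M N : Matrix (Fin n) (Fin n) (ZMod 2)} {i a : Fin n}

lemma mul_clearRowOp_apply (N M : Matrix (Fin n) (Fin n) (ZMod 2)) (i a r j : Fin n) :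
    (N * clearRowOp M i a) r j =
      N r j + N r a * (M i j - (Pi.single a 1 : Fin n → ZMod 2) j) := by
  simp [clearRowOp, Matrix.mul_add, mul_vecMulVec, vecMulVec_apply]

lemma mul_clearRowOp_row (h : M i a = 1) : (M * clearRowOp M i a) i = Pi.single a 1 := by
  ext j
  rw [mul_clearRowOp_apply, h, one_mul, ← add_sub_assoc, CharTwo.add_self_eq_zero, zero_sub,
    CharTwo.neg_eq]

lemma mul_clearRowOp_of_column_eq_zero (h : column N a = 0) : N * clearRowOp M i a = N := by
  ext r j
  rw [mul_clearRowOp_apply, show N r a = 0 from congr_fun h r, zero_mul, add_zero]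

lemma isUpperUnitriangular_clearRowOp (h : M i a = 1) (hlt : ∀ j < a, M i j = 0) :
    IsUpperUnitriangular (clearRowOp M i a) := by
  have hχ : ∀ j ≤ a, M i j - (Pi.single a 1 : Fin n → ZMod 2) j = 0 := by
    intro j hj
    rcases hj.lt_or_eq with hj | rfl
    · simp [hlt j hj, Pi.single_eq_of_ne hj.ne]
    · simp [h]
  refine ⟨fun r j hjr => ?_, fun r => ?_⟩
  · simp only [clearRowOp, Matrix.add_apply, one_apply_ne hjr.ne', vecMulVec_apply, zero_add]
    rcases eq_or_ne r a with rfl | hr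
    · rw [Pi.single_eq_same, one_mul]
      exact hχ j hjr.le
    · rw [Pi.single_eq_of_ne hr, zero_mul]
  · simp only [clearRowOp, Matrix.add_apply, one_apply_eq, vecMulVec_apply, add_eq_left]
    rcases eq_or_ne r a with rfl | hr
    · rw [Pi.single_eq_same, one_mul]
      exact hχ r le_rfl
    · rw [Pi.single_eq_of_ne hr, zero_mul]

lemma ReducedMat.lowM_mul_clearRowOp (hR : ReducedMat N) (ha : lowM N a = i) :
    lowM (N * clearRowOp N i a) = lowM N := by
  funext j
  set c := N i j - (Pi.single a 1 : Fin n → ZMod 2) j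
  have hcol : column (N * clearRowOp N i a) j = column N j + c • column N a := by
    ext r
    simp [column, mul_clearRowOp_apply, c, mul_comm]
  rw [lowM, hcol]
  rcases eq_or_ne c 0 with hc | hc
  · rw [hc, zero_smul, add_zero]
    rfl
  have hja : j ≠ a := by
    rintro rfl
    exact hc (by simp [c, show N i j = 1 from apply_eq_one_of_low_eq (v := column N j) ha])
  have hNij : N i j ≠ 0 := by simpa [c, hja] using hc
  have hlt : (i : WithBot (Fin n)) < lowM N j :=
    (coe_le_low (v := column N j) hNij).lt_of_ne fun h =>
      hNij (congr_fun (hR.column_eq_zero_of_lowM_eq hja (h.symm.trans ha.symm)) i)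
  exact low_add_eq_left fun m hm =>
    ((coe_le_low (v := column N a) (right_ne_zero_of_smul (a := c) hm)).trans ha.le).trans_lt hlt

end ClearRowOp

def lowPairs {n : ℕ} (R : Matrix (Fin n) (Fin n) (ZMod 2)) : Set (Fin n × Fin n) :=
  {p | lowM R p.2 = p.1}

lemma setOf_column_ne_zero_and_lowM_eq {n : ℕ} (R : Matrix (Fin n) (Fin n) (ZMod 2)) :
    {p : Fin n × Fin n | column R p.2 ≠ 0 ∧ lowM R p.2 = (p.1 : WithBot (Fin n))} = lowPairs R :=
  Set.ext fun _ => and_iff_right_of_imp column_ne_zero_of_lowM_eq_coe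

section Complement

variable {n k : ℕ} {b A : Fin n} (hcard : ({b, A}ᶜ : Finset (Fin n)).card = k)

lemma orderEmbOfFin_compl_pair_ne (q : Fin k) :
    orderEmbOfFin _ hcard q ≠ b ∧ orderEmbOfFin _ hcard q ≠ A := by
  have := orderEmbOfFin_mem _ hcard q
  rwa [mem_compl, mem_insert, mem_singleton, not_or] at this

lemma exists_orderEmbOfFin_compl_pair_eq {j : Fin n} (hjb : j ≠ b) (hjA : j ≠ A) :
    ∃ q, orderEmbOfFin _ hcard q = j := by
  show j ∈ Set.range (orderEmbOfFin _ hcard)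
  rw [range_orderEmbOfFin]
  simp [hjb, hjA]

lemma sum_eq_add_add_sum_orderEmbOfFin {M : Type*} [AddCommMonoid M] (hbA : b ≠ A)
    (f : Fin n → M) : ∑ j, f j = f b + f A + ∑ q, f (orderEmbOfFin _ hcard q) := by
  rw [← sum_add_sum_compl {b, A} f, sum_pair hbA]
  congr 1
  conv_lhs => rw [← map_orderEmbOfFin_univ _ hcard]
  exact sum_map _ _ _

lemma submatrix_mul_submatrix_orderEmbOfFin (hbA : b ≠ A)
    (E W : Matrix (Fin n) (Fin n) (ZMod 2)) (hWb : W b = Pi.single b 1)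
    (hWA : W A = Pi.single A 1) :
    E.submatrix (orderEmbOfFin _ hcard) (orderEmbOfFin _ hcard) *
        W.submatrix (orderEmbOfFin _ hcard) (orderEmbOfFin _ hcard) =
      (E * W).submatrix (orderEmbOfFin _ hcard) (orderEmbOfFin _ hcard) := by
  ext p q
  obtain ⟨hqb, hqA⟩ := orderEmbOfFin_compl_pair_ne hcard q
  simp only [submatrix_apply, mul_apply]
  rw [sum_eq_add_add_sum_orderEmbOfFin hcard hbA (fun j => E _ j * W j _), hWb, hWA,
    Pi.single_eq_of_ne hqb, Pi.single_eq_of_ne hqA, mul_zero, mul_zero, zero_add, zero_add]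

variable {M : Matrix (Fin n) (Fin n) (ZMod 2)}

lemma lowM_submatrix_orderEmbOfFin (hM : ReducedMat M) (hMA : lowM M A = b)
    (hnotA : ∀ j, lowM M j ≠ A) (q : Fin k) :
    (lowM (M.submatrix (orderEmbOfFin _ hcard) (orderEmbOfFin _ hcard)) q).map
      (orderEmbOfFin _ hcard) = lowM M (orderEmbOfFin _ hcard q) := by
  refine low_comp_orderEmbedding (v := column M (orderEmbOfFin _ hcard q)) _ fun i hi =>
    exists_orderEmbOfFin_compl_pair_eq hcard ?_ ?_
  · rintro rfl
    exact column_ne_zero_of_lowM_eq_coe hi <|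
      hM.column_eq_zero_of_lowM_eq (orderEmbOfFin_compl_pair_ne hcard q).2 (hi.trans hMA.symm)
  · rintro rfl
    exact hnotA _ hi

lemma ReducedMat.submatrix_orderEmbOfFin (hM : ReducedMat M) (hMA : lowM M A = b)
    (hnotA : ∀ j, lowM M j ≠ A) :
    ReducedMat (M.submatrix (orderEmbOfFin _ hcard) (orderEmbOfFin _ hcard)) := by
  refine reducedMat_iff_lowM.2 fun q₁ q₂ hq h => ?_
  have hlow := lowM_submatrix_orderEmbOfFin hcard hM hMA hnotA
  have key := reducedMat_iff_lowM.1 hM _ _ ((orderEmbOfFin _ hcard).injective.ne hq)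
    (by rw [← hlow q₁, ← hlow q₂, h])
  rwa [← hlow q₁, WithBot.map_eq_bot_iff] at key

lemma lowPairs_eq_insert_image (hM : ReducedMat M) (hMA : lowM M A = b) (hMb : column M b = 0)
    (hnotA : ∀ j, lowM M j ≠ A) :
    lowPairs M = insert (b, A) (Prod.map (orderEmbOfFin _ hcard) (orderEmbOfFin _ hcard) ''
      lowPairs (M.submatrix (orderEmbOfFin _ hcard) (orderEmbOfFin _ hcard))) := by
  have hlow := lowM_submatrix_orderEmbOfFin hcard hM hMA hnotA
  ext ⟨i, j⟩
  simp only [lowPairs, Set.mem_ofPred_eq, Set.mem_insert_iff, Set.mem_image, Prod.mk.injEq,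
    Prod.exists, Prod.map]
  constructor
  · intro h
    by_cases hjA : j = A
    · subst hjA
      exact Or.inl ⟨WithBot.coe_injective (h.symm.trans hMA), rfl⟩
    by_cases hjb : j = b
    · subst hjb
      exact absurd hMb (column_ne_zero_of_lowM_eq_coe h)
    obtain ⟨q, rfl⟩ := exists_orderEmbOfFin_compl_pair_eq hcard hjb hjA
    obtain ⟨p, hp, rfl⟩ := WithBot.map_eq_some_iff.1 ((hlow q).trans h)
    exact Or.inr ⟨p, q, hp, rfl, rfl⟩
  · rintro (⟨rfl, rfl⟩ | ⟨p, q, h, rfl, rfl⟩)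
    · exact hMA
    · rw [← hlow q, h, WithBot.map_coe]

end Complement

section MorseStep

variable {n : ℕ} {D : Matrix (Fin n) (Fin n) (ZMod 2)} {A b : Fin n}

lemma ne_of_lowM_eq (hDD : D * D = 0) (hzero : ∀ j : Fin n, j < A → column D j = 0)
    (hb : lowM D A = b) : b ≠ A := by
  rintro rfl
  have h := congr_fun₂ hDD b b
  rw [mul_apply, sum_eq_single b (fun k _ hkb => ?_) (by simp)] at h
  · exact (low_eq_coe_iff.1 hb).1 (mul_self_eq_zero.1 h)
  · rcases hkb.lt_or_gt with hk | hk
    · rw [show D b k = 0 from congr_fun (hzero k hk) b, zero_mul]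
    · rw [show D k b = 0 from (low_eq_coe_iff.1 hb).2 k hk, mul_zero]

lemma column_mul_of_le (hzero : ∀ j : Fin n, j < A → column D j = 0)
    {V : Matrix (Fin n) (Fin n) (ZMod 2)} (hV : IsUpperUnitriangular V) {j : Fin n}
    (hj : j ≤ A) : column (D * V) j = column D j := by
  ext i
  rw [column, mul_apply, sum_eq_single j (fun k _ hkj => ?_) (by simp), hV.2, mul_one]
  · rfl
  rcases hkj.lt_or_gt with hk | hk
  · rw [show D i k = 0 from congr_fun (hzero k (hk.trans_le hj)) i, zero_mul]
  · rw [hV.1 k j hk, mul_zero]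

lemma lowM_mul_of_le (hzero : ∀ j : Fin n, j < A → column D j = 0)
    {V : Matrix (Fin n) (Fin n) (ZMod 2)} (hV : IsUpperUnitriangular V) {j : Fin n}
    (hj : j ≤ A) : lowM (D * V) j = lowM D j := by
  rw [lowM, column_mul_of_le hzero hV hj, lowM]

lemma addColA_eq_mul_clearRowOp (h : D b A = 1) : addColA D A b = D * clearRowOp D b A := by
  ext i j
  rw [mul_clearRowOp_apply, addColA]
  rcases eq_or_ne j A with rfl | hj
  · simp [h]
  by_cases hbj : D b j = 1
  · simp [hj, hbj]
  · have h0 : D b j = 0 := not_not.1 (mt (Fin.eq_one_of_ne_zero _) hbj)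
    simp [hj, h0]

lemma addColA_row (h : D b A = 1) : addColA D A b b = Pi.single A 1 := by
  rw [addColA_eq_mul_clearRowOp h, mul_clearRowOp_row h]

lemma addColA_mul_self_apply (hDD : D * D = 0) (h : D b A = 1) (i j : Fin n) :
    (addColA D A b * addColA D A b) i j = addColA D A b i A * addColA D A b A j := by
  set ε := D b - Pi.single A 1
  have hE : ∀ i j, addColA D A b i j = D i j + D i A * ε j := fun i j => by
    rw [addColA_eq_mul_clearRowOp h, mul_clearRowOp_apply]
    rfl
  have hDD' : ∀ i j, ∑ k, D i k * D k j = 0 := fun i j => by rw [← mul_apply, hDD]; rfl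
  have hεD : ∀ j, ∑ k, ε k * D k j = D A j := fun j => by
    simp [ε, sub_mul, sum_sub_distrib, hDD', Pi.single_apply, CharTwo.neg_eq]
  have hεA : ε A = 0 := by simp [ε, h]
  calc ∑ k, addColA D A b i k * addColA D A b k j
      = ∑ k, D i k * D k j + ε j * ∑ k, D i k * D k A + D i A * ∑ k, ε k * D k j +
          D i A * ε j * ∑ k, ε k * D k A := by
        simp only [hE, mul_sum, ← sum_add_distrib]
        exact sum_congr rfl fun k _ => by ring
    _ = D i A * (D A j + D A A * ε j) := by rw [hDD', hDD', hεD, hεD]; ring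
    _ = addColA D A b i A * addColA D A b A j := by rw [hE, hE, hεA]; ring

theorem morseReduce_mul_self (hDD : D * D = 0) (hzero : ∀ j : Fin n, j < A → column D j = 0)
    (hb : lowM D A = b) (hcard : ({b, A}ᶜ : Finset (Fin n)).card = n - 2) :
    morseReduce D A b hcard * morseReduce D A b hcard = 0 := by
  have hDbA : D b A = 1 := apply_eq_one_of_lowM_eq hb
  ext p q
  -- In the full sum, the `k = A` term is all of `(E * E) p q` and the `k = b` term vanishes.
  have hsplit := sum_eq_add_add_sum_orderEmbOfFin hcard (ne_of_lowM_eq hDD hzero hb)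
    fun k => addColA D A b (orderEmbOfFin _ hcard p) k * addColA D A b k (orderEmbOfFin _ hcard q)
  rw [← mul_apply, addColA_mul_self_apply hDD hDbA, addColA_row hDbA,
    Pi.single_eq_of_ne (orderEmbOfFin_compl_pair_ne hcard q).2, mul_zero, zero_add,
    left_eq_add] at hsplit
  exact hsplit

theorem exists_addColA_mul_lowM_eq (hDD : D * D = 0)
    (hzero : ∀ j : Fin n, j < A → column D j = 0) (hb : lowM D A = b)
    {V : Matrix (Fin n) (Fin n) (ZMod 2)} (hV : IsUpperUnitriangular V)
    (hR : ReducedMat (D * V)) :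
    ∃ W, IsUpperUnitriangular W ∧ lowM (addColA D A b * W) = lowM (D * V) ∧
      W b = Pi.single b 1 ∧ W A = Pi.single A 1 := by
  have hbA := ne_of_lowM_eq hDD hzero hb
  have hDbA : D b A = 1 := apply_eq_one_of_lowM_eq hb
  have hRA : lowM (D * V) A = b := (lowM_mul_of_le hzero hV le_rfl).trans hb
  have hRbA : (D * V) b A = 1 := apply_eq_one_of_lowM_eq hRA
  have hC := isUpperUnitriangular_clearRowOp hDbA fun j hj => congr_fun (hzero j hj) b
  have hK := isUpperUnitriangular_clearRowOp hRbA fun j hj =>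
    (congr_fun (column_mul_of_le hzero hV hj.le) b).trans (congr_fun (hzero j hj) b)
  set W₁ := (clearRowOp D b A)⁻¹ * (V * clearRowOp (D * V) b A)
  have hW₁ : IsUpperUnitriangular W₁ := hC.inv.mul (hV.mul hK)
  have hEW₁ : addColA D A b * W₁ = D * V * clearRowOp (D * V) b A := by
    rw [addColA_eq_mul_clearRowOp hDbA, Matrix.mul_assoc, ← Matrix.mul_assoc (clearRowOp D b A),
      hC.mul_inv, Matrix.one_mul, Matrix.mul_assoc]
  have hW₁A : W₁ A = Pi.single A 1 := by
    rw [← mul_row_eq_of_row_eq_single (W := W₁) (addColA_row hDbA), hEW₁, mul_clearRowOp_row hRbA]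
  have hlow := hR.lowM_mul_clearRowOp hRA
  refine ⟨W₁ * clearRowOp W₁ b b,
    hW₁.mul (isUpperUnitriangular_clearRowOp (hW₁.2 b) fun j hj => hW₁.1 b j hj), ?_,
    mul_clearRowOp_row (hW₁.2 b), ?_⟩
  · rw [← Matrix.mul_assoc, hEW₁, mul_clearRowOp_of_column_eq_zero, hlow]
    rw [← lowM_eq_bot_iff, hlow, lowM_eq_bot_iff]
    exact column_eq_zero_of_lowM_eq_of_mul_self_eq_zero hDD hV hR hRA
  · ext j
    rw [mul_clearRowOp_apply, hW₁A, Pi.single_eq_of_ne hbA, zero_mul, add_zero]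

lemma morseReduce_eq_submatrix (hcard : ({b, A}ᶜ : Finset (Fin n)).card = n - 2) :
    morseReduce D A b hcard =
      (addColA D A b).submatrix (orderEmbOfFin _ hcard) (orderEmbOfFin _ hcard) :=
  rfl

theorem exists_reduction_morseReduce (hDD : D * D = 0)
    (hzero : ∀ j : Fin n, j < A → column D j = 0) (hA : column D A ≠ 0) (hb : lowM D A = b)
    (hcard : ({b, A}ᶜ : Finset (Fin n)).card = n - 2) {V : Matrix (Fin n) (Fin n) (ZMod 2)}
    (hV : IsUpperUnitriangular V) (hR : ReducedMat (D * V)) :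
    ∃ V', IsUpperUnitriangular V' ∧ ReducedMat (morseReduce D A b hcard * V') ∧
      lowPairs (D * V) = insert (b, A) (Prod.map (orderEmbOfFin _ hcard) (orderEmbOfFin _ hcard) ''
        lowPairs (morseReduce D A b hcard * V')) := by
  obtain ⟨W, hW, hlow, hWb, hWA⟩ := exists_addColA_mul_lowM_eq hDD hzero hb hV hR
  have hRA : lowM (D * V) A = b := (lowM_mul_of_le hzero hV le_rfl).trans hb
  have hM : ReducedMat (addColA D A b * W) := hR.of_lowM_eq hlow
  have hMA : lowM (addColA D A b * W) A = b := by rw [hlow, hRA]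
  have hMb : column (addColA D A b * W) b = 0 := by
    rw [← lowM_eq_bot_iff, hlow, lowM_eq_bot_iff]
    exact column_eq_zero_of_lowM_eq_of_mul_self_eq_zero hDD hV hR hRA
  have hnotA : ∀ j, lowM (addColA D A b * W) j ≠ A := fun j h => hA <| by
    rw [hlow] at h
    rw [← column_mul_of_le hzero hV le_rfl]
    exact column_eq_zero_of_lowM_eq_of_mul_self_eq_zero hDD hV hR h
  have hsub := submatrix_mul_submatrix_orderEmbOfFin hcard (ne_of_lowM_eq hDD hzero hb)
    (addColA D A b) W hWb hWA
  rw [← morseReduce_eq_submatrix] at hsub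
  refine ⟨W.submatrix _ _, hW.submatrix _, hsub ▸ hM.submatrix_orderEmbOfFin hcard hMA hnotA, ?_⟩
  rw [hsub, ← lowPairs_eq_insert_image hcard hM hMA hMb hnotA]
  simp only [lowPairs, hlow]

end MorseStep

/-- Making a single Morse matching `(A, b)` is equivalent to resolving at once all
future collisions caused by row `b` in the matrix-reduction algorithm: `D'·D' = 0`,
and the lowest-one pairs of any reduction of `D` are exactly the pair `(b, A)`
together with the (re-indexed) lowest-one pairs of any reduction of `D'`. -/
theorem morse_matching_step {n : ℕ} (D : Matrix (Fin n) (Fin n) (ZMod 2))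
    (hDD : D * D = 0) (A b : Fin n)
    (hzero : ∀ j : Fin n, j < A → column D j = 0) (hA : column D A ≠ 0)
    (hb : lowM D A = (b : WithBot (Fin n)))
    (hcard : ({b, A}ᶜ : Finset (Fin n)).card = n - 2) :
    morseReduce D A b hcard * morseReduce D A b hcard = 0 ∧
      ∀ (V : Matrix (Fin n) (Fin n) (ZMod 2))
        (V' : Matrix (Fin (n - 2)) (Fin (n - 2)) (ZMod 2)),
        IsUpperUnitriangular V → IsUpperUnitriangular V' →
        ReducedMat (D * V) → ReducedMat (morseReduce D A b hcard * V') →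
        {p : Fin n × Fin n |
            column (D * V) p.2 ≠ 0 ∧ lowM (D * V) p.2 = (p.1 : WithBot (Fin n))} =
          insert (b, A)
            ((fun q : Fin (n - 2) × Fin (n - 2) =>
                ((Finset.orderEmbOfFin _ hcard q.1 : Fin n),
                  (Finset.orderEmbOfFin _ hcard q.2 : Fin n))) ''
              {q : Fin (n - 2) × Fin (n - 2) |
                column (morseReduce D A b hcard * V') q.2 ≠ 0 ∧
                  lowM (morseReduce D A b hcard * V') q.2 =
                    (q.1 : WithBot (Fin (n - 2)))}) := by
  refine ⟨morseReduce_mul_self hDD hzero hb hcard, fun V V' hV hV' hR hR' => ?_⟩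
  obtain ⟨V'', hV'', hR'', hpairs⟩ := exists_reduction_morseReduce hDD hzero hA hb hcard hV hR
  rw [setOf_column_ne_zero_and_lowM_eq, setOf_column_ne_zero_and_lowM_eq, hpairs]
  simp only [lowPairs, lowM_mul_eq_of_reducedMat _ hV' hV'' hR' hR'']
  rfl
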